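/- arXiv:2511.21804 — 3 statements merged into one kernel-verified Lean document; each statement's English description precedes it below -/
import Mathlib

section
/- Conversion from μ-GDP to (ε, δ)-DP: if a mechanism is μ-GDP, then for every ε ≥ 0 it satisfies (ε, δ(ε))-DP where δ(ε) = Φ(−ε/μ + μ/2) − e^ε · Φ(−ε/μ − μ/2), with Φ the standard normal CDF. -/
open Real MeasureTheory ProbabilityTheory
open scoped NNReal

/-- The standard normal CDF. -/
noncomputable def Phi (x : ℝ) : ℝ := ((gaussianReal 0 1) (Set.Iic x)).toReal

lemma gauss_toReal (m : ℝ) (s : Set ℝ) :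
    ((gaussianReal m 1) s).toReal = ∫ x in s, gaussianPDFReal m 1 x := by
  rw [gaussianReal_apply_eq_integral m one_ne_zero s, ENNReal.toReal_ofReal]
  exact integral_nonneg fun x => gaussianPDFReal_nonneg _ _ _

lemma gauss_singleton (m a : ℝ) : (gaussianReal m 1) {a} = 0 :=
  gaussianReal_absolutelyContinuous m one_ne_zero (volume_singleton)

lemma gauss_Iio (m a : ℝ) : (gaussianReal m 1) (Set.Iio a) = (gaussianReal m 1) (Set.Iic a) := by
  have hu : (gaussianReal m 1) (Set.Iio a ∪ {a})
      = (gaussianReal m 1) (Set.Iio a) + (gaussianReal m 1) {a} :=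
    measure_union (by simp) (measurableSet_singleton a)
  rw [← Set.Iio_union_right, hu, gauss_singleton, add_zero]

lemma gauss_Ioi (m t : ℝ) : ((gaussianReal m 1) (Set.Ioi t)).toReal = Phi (m - t) := by
  have h1 : (gaussianReal m 1) (Set.Ioi t) = (gaussianReal (-m) 1) (Set.Iio (-t)) := by
    have hm : (gaussianReal m 1).map (fun x : ℝ => -1 * x) = gaussianReal (-m) 1 := by
      rw [ProbabilityTheory.gaussianReal_map_const_mul (μ := m) (v := 1) (-1)]
      congr 1
      · ring
      · ext
        norm_num
    have hmap : ((gaussianReal m 1).map (fun x : ℝ => -1 * x)) (Set.Iio (-t))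
        = (gaussianReal m 1) ((fun x : ℝ => -1 * x) ⁻¹' Set.Iio (-t)) :=
      Measure.map_apply (by fun_prop) measurableSet_Iio
    have hpre : (fun x : ℝ => -1 * x) ⁻¹' Set.Iio (-t) = Set.Ioi t := by
      ext x
      simp only [Set.mem_preimage, Set.mem_Iio, Set.mem_Ioi]
      constructor <;> intro h <;> linarith
    rw [hm, hpre] at hmap
    exact hmap.symm
  have h2 : (gaussianReal (-m) 1) (Set.Iio (-t)) = (gaussianReal 0 1) (Set.Iio (m - t)) := by
    have := ProbabilityTheory.gaussianReal_map_add_const (μ := -m) (v := 1) m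
    have hmap : ((gaussianReal (-m) 1).map (· + m)) (Set.Iio (m - t))
        = (gaussianReal (-m) 1) ((· + m) ⁻¹' Set.Iio (m - t)) :=
      Measure.map_apply (by fun_prop) measurableSet_Iio
    have hpre : ((· + m) : ℝ → ℝ) ⁻¹' Set.Iio (m - t) = Set.Iio (-t) := by
      ext x
      simp only [Set.mem_preimage, Set.mem_Iio]
      constructor <;> intro h <;> linarith
    rw [this, hpre] at hmap
    simpa using hmap.symm
  rw [h1, h2, gauss_Iio, Phi]

/-- Conversion from μ-GDP to (ε, δ)-DP for the Gaussian mechanism: for `μ > 0`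
and `ε ≥ 0`, distinguishing `N(μ,1)` from `N(0,1)` satisfies, for every
measurable set `S`,
`P_{N(μ,1)}(S) ≤ e^ε P_{N(0,1)}(S) + Φ(−ε/μ + μ/2) − e^ε Φ(−ε/μ − μ/2)`. -/
theorem gdp_to_approx_dp (μ : ℝ) (hμ : 0 < μ) (ε : ℝ) (hε : 0 ≤ ε) :
    ∀ S : Set ℝ, MeasurableSet S →
      ((gaussianReal μ 1) S).toReal ≤
        exp ε * ((gaussianReal 0 1) S).toReal +
          (Phi (-ε / μ + μ / 2) - exp ε * Phi (-ε / μ - μ / 2)) := by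
  intro S hS
  set t : ℝ := ε / μ + μ / 2 with ht
  set f : ℝ → ℝ := gaussianPDFReal μ 1 with hf
  set g : ℝ → ℝ := gaussianPDFReal 0 1 with hg
  -- pointwise comparison
  have hratio : ∀ x : ℝ, f x - exp ε * g x = (exp (μ * x - μ^2/2) - exp ε) * g x := by
    intro x
    have hgpos : 0 < g x := gaussianPDFReal_pos 0 1 x one_ne_zero
    have hx : rexp (-(x - μ)^2 / (2*((1:ℝ≥0):ℝ)))
        = rexp (μ*x - μ^2/2) * rexp (-(x-0)^2/(2*((1:ℝ≥0):ℝ))) := by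
      rw [← Real.exp_add]
      congr 1
      push_cast
      ring
    simp only [hf, hg, gaussianPDFReal]
    rw [hx]
    ring
  have key_le : ∀ x : ℝ, x ≤ t → f x - exp ε * g x ≤ 0 := by
    intro x hx
    rw [hratio x]
    apply mul_nonpos_of_nonpos_of_nonneg
    · have : μ * x - μ^2/2 ≤ ε := by
        have : μ * x ≤ μ * t := by nlinarith
        rw [ht] at this
        have h2 : μ * (ε / μ + μ / 2) = ε + μ^2/2 := by
          field_simp
        nlinarith
      simpa using Real.exp_le_exp.mpr this
    · exact gaussianPDFReal_nonneg _ _ _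
  have key_ge : ∀ x : ℝ, t ≤ x → 0 ≤ f x - exp ε * g x := by
    intro x hx
    rw [hratio x]
    apply mul_nonneg
    · have : ε ≤ μ * x - μ^2/2 := by
        have : μ * t ≤ μ * x := by nlinarith
        rw [ht] at this
        have h2 : μ * (ε / μ + μ / 2) = ε + μ^2/2 := by
          field_simp
        nlinarith
      simpa using Real.exp_le_exp.mpr this
    · exact gaussianPDFReal_nonneg _ _ _
  -- integrability
  have hfi : Integrable f := integrable_gaussianPDFReal μ 1
  have hgi : Integrable g := integrable_gaussianPDFReal 0 1
  have hdi : Integrable (fun x => f x - exp ε * g x) := hfi.sub (hgi.const_mul _)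
  -- main integral inequality
  have main : ∫ x in S, (f x - exp ε * g x) ≤ ∫ x in Set.Ioi t, (f x - exp ε * g x) := by
    have hsplit : ∫ x in S, (f x - exp ε * g x)
        = (∫ x in S ∩ Set.Ioi t, (f x - exp ε * g x))
          + ∫ x in S ∩ Set.Iic t, (f x - exp ε * g x) := by
      rw [← setIntegral_union]
      · congr 1
        have huniv : Set.Ioi t ∪ Set.Iic t = Set.univ := by
          rw [Set.union_comm]; exact Set.Iic_union_Ioi
        rw [← Set.inter_union_distrib_left, huniv, Set.inter_univ]
      · apply Set.disjoint_of_subset Set.inter_subset_right Set.inter_subset_right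
        exact (Set.Iic_disjoint_Ioi le_rfl).symm
      · exact hS.inter measurableSet_Iic
      · exact hdi.integrableOn
      · exact hdi.integrableOn
    rw [hsplit]
    have h1 : ∫ x in S ∩ Set.Iic t, (f x - exp ε * g x) ≤ 0 := by
      apply setIntegral_nonpos (hS.inter measurableSet_Iic)
      intro x hx
      exact key_le x hx.2
    have h2 : ∫ x in S ∩ Set.Ioi t, (f x - exp ε * g x)
        ≤ ∫ x in Set.Ioi t, (f x - exp ε * g x) := by
      apply setIntegral_mono_set hdi.integrableOn
      · filter_upwards [ae_restrict_mem measurableSet_Ioi] with x hx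
        exact key_ge x (le_of_lt hx)
      · exact Filter.Eventually.of_forall fun x hx => hx.2
    linarith
  -- rewrite everything
  have eS : ((gaussianReal μ 1) S).toReal = ∫ x in S, f x := gauss_toReal μ S
  have eS0 : ((gaussianReal 0 1) S).toReal = ∫ x in S, g x := gauss_toReal 0 S
  have eA : ∫ x in Set.Ioi t, f x = Phi (-ε / μ + μ / 2) := by
    rw [hf, ← gauss_toReal, gauss_Ioi]
    congr 1
    rw [ht]; ring
  have eA0 : ∫ x in Set.Ioi t, g x = Phi (-ε / μ - μ / 2) := by
    rw [hg, ← gauss_toReal, gauss_Ioi]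
    congr 1
    rw [ht]; ring
  have hIS : ∫ x in S, (f x - exp ε * g x) = (∫ x in S, f x) - exp ε * ∫ x in S, g x := by
    rw [integral_sub hfi.integrableOn ((hgi.const_mul _).integrableOn),
      integral_const_mul]
  have hIA : ∫ x in Set.Ioi t, (f x - exp ε * g x)
      = (∫ x in Set.Ioi t, f x) - exp ε * ∫ x in Set.Ioi t, g x := by
    rw [integral_sub hfi.integrableOn ((hgi.const_mul _).integrableOn),
      integral_const_mul]
  rw [eS, eS0]
  rw [hIS, hIA, eA, eA0] at main
  linarith
end

section
/- For the pair of Gaussian distributions N(0,1) and N(μ,1) with μ > 0, the privacy loss log(p_{N(μ,1)}(x)/p_{N(0,1)}(x)) = μx − μ²/2, and the supremum over measurable sets S of P_{N(μ,1)}(S) − e^ε P_{N(0,1)}(S) equals Φ(−ε/μ + μ/2) − e^ε Φ(−ε/μ − μ/2). -/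
/-! The likelihood ratio of `N(μ,1)` to `N(0,1)` is `exp (μ x - μ²/2)`, which is increasing in `x`
for `μ > 0`. Hence the integrand `p_{N(μ,1)} - e^ε p_{N(0,1)}` is nonnegative exactly on the
half-line `[ε/μ + μ/2, ∞)`, and that half-line maximises its integral over all measurable sets
(a Neyman–Pearson argument). Reflecting `x ↦ μ - x` turns the two masses of the half-line into
values of `Φ`. -/

open Real MeasureTheory ProbabilityTheory

open Set

theorem setIntegral_le_setIntegral_of_nonneg_of_nonpos_compl {α : Type*} [MeasurableSpace α]
    {ν : Measure α} {f : α → ℝ} {S T : Set α} (hf : Integrable f ν) (hS : MeasurableSet S)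
    (hT : MeasurableSet T) (hpos : ∀ x ∈ T, 0 ≤ f x) (hneg : ∀ x ∈ Tᶜ, f x ≤ 0) :
    ∫ x in S, f x ∂ν ≤ ∫ x in T, f x ∂ν := by
  have hdiff : ∫ x in S \ T, f x ∂ν ≤ 0 :=
    setIntegral_nonpos (hS.diff hT) fun x hx => hneg x hx.2
  have hinter : ∫ x in S ∩ T, f x ∂ν ≤ ∫ x in T, f x ∂ν :=
    setIntegral_mono_set hf.integrableOn
      ((ae_restrict_iff' hT).2 (ae_of_all _ hpos)) inter_subset_right.eventuallyLE
  linarith [integral_inter_add_sdiff hT (μ := ν) hf.integrableOn (s := S)]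

theorem gaussianPDFReal_eq_exp_mul_gaussianPDFReal_zero (μ x : ℝ) :
    gaussianPDFReal μ 1 x = exp (μ * x - μ ^ 2 / 2) * gaussianPDFReal 0 1 x := by
  simp only [gaussianPDFReal, NNReal.coe_one, mul_one, sub_zero]
  rw [show -(x - μ) ^ 2 / 2 = (μ * x - μ ^ 2 / 2) + -x ^ 2 / 2 by ring, exp_add]
  ring

theorem log_gaussianPDFReal_div_gaussianPDFReal_zero (μ x : ℝ) :
    log (gaussianPDFReal μ 1 x / gaussianPDFReal 0 1 x) = μ * x - μ ^ 2 / 2 := by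
  rw [gaussianPDFReal_eq_exp_mul_gaussianPDFReal_zero,
    mul_div_cancel_right₀ _ (gaussianPDFReal_pos 0 1 x one_ne_zero).ne', log_exp]

theorem gaussianPDFReal_sub_exp_mul_nonneg_iff {μ : ℝ} (hμ : 0 < μ) (ε x : ℝ) :
    0 ≤ gaussianPDFReal μ 1 x - exp ε * gaussianPDFReal 0 1 x ↔ ε / μ + μ / 2 ≤ x := by
  rw [gaussianPDFReal_eq_exp_mul_gaussianPDFReal_zero, ← sub_mul,
    mul_nonneg_iff_of_pos_right (gaussianPDFReal_pos 0 1 x one_ne_zero), sub_nonneg, exp_le_exp,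
    show ε / μ + μ / 2 = (ε + μ ^ 2 / 2) / μ by field_simp, div_le_iff₀ hμ]
  constructor <;> intro h <;> linarith

theorem toReal_gaussianReal_sub_mul_eq_setIntegral (m₁ m₂ : ℝ) {v : NNReal} (hv : v ≠ 0)
    (a : ℝ) (S : Set ℝ) :
    (gaussianReal m₁ v S).toReal - a * (gaussianReal m₂ v S).toReal
      = ∫ x in S, (gaussianPDFReal m₁ v x - a * gaussianPDFReal m₂ v x) := by
  rw [gaussianReal_apply_eq_integral m₁ hv, gaussianReal_apply_eq_integral m₂ hv,
    ENNReal.toReal_ofReal (setIntegral_nonneg_of_ae ?_),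
    ENNReal.toReal_ofReal (setIntegral_nonneg_of_ae ?_),
    integral_sub (integrable_gaussianPDFReal m₁ v).integrableOn
      ((integrable_gaussianPDFReal m₂ v).const_mul a).integrableOn, integral_const_mul]
  all_goals exact ae_of_all _ (gaussianPDFReal_nonneg _ _)

theorem gaussianReal_Ici (m : ℝ) (v : NNReal) (c : ℝ) :
    gaussianReal m v (Ici c) = gaussianReal 0 v (Iic (m - c)) := by
  rw [← sub_zero m, ← gaussianReal_map_const_sub, Measure.map_apply (by fun_prop) measurableSet_Ici]
  congr 1
  ext x
  simp [le_sub_comm]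

theorem gaussian_privacy_loss_and_sup_general (μ : ℝ) (hμ : 0 < μ) (ε : ℝ) :
    (∀ x : ℝ, Real.log (gaussianPDFReal μ 1 x / gaussianPDFReal 0 1 x)
        = μ * x - μ ^ 2 / 2) ∧
    IsGreatest
      {d : ℝ | ∃ S : Set ℝ, MeasurableSet S ∧
        d = ((gaussianReal μ 1) S).toReal - exp ε * ((gaussianReal 0 1) S).toReal}
      (Phi (-ε / μ + μ / 2) - exp ε * Phi (-ε / μ - μ / 2)) := by
  set c := ε / μ + μ / 2
  have hPhi (m : ℝ) : Phi (m - c) = (gaussianReal m 1 (Ici c)).toReal := by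
    rw [gaussianReal_Ici, Phi]
  rw [show -ε / μ + μ / 2 = μ - c by ring, show -ε / μ - μ / 2 = 0 - c by ring, hPhi, hPhi]
  refine ⟨log_gaussianPDFReal_div_gaussianPDFReal_zero μ, ⟨Ici c, measurableSet_Ici, rfl⟩, ?_⟩
  rintro _ ⟨S, hS, rfl⟩
  simp only [toReal_gaussianReal_sub_mul_eq_setIntegral μ 0 one_ne_zero]
  have hsign := gaussianPDFReal_sub_exp_mul_nonneg_iff hμ ε
  exact setIntegral_le_setIntegral_of_nonneg_of_nonpos_compl
    ((integrable_gaussianPDFReal μ 1).sub ((integrable_gaussianPDFReal 0 1).const_mul _))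
    hS measurableSet_Ici (fun x hx => (hsign x).2 hx)
    (fun x hx => (not_le.1 (mt (hsign x).1 hx)).le)

/-- For `N(0,1)` vs `N(μ,1)` with `μ > 0`: the privacy loss is
`log(p_{N(μ,1)}(x)/p_{N(0,1)}(x)) = μx − μ²/2`, and the supremum over measurable
sets `S` of `P_{N(μ,1)}(S) − e^ε P_{N(0,1)}(S)` equals
`Φ(−ε/μ + μ/2) − e^ε Φ(−ε/μ − μ/2)` (and is attained). -/
theorem gaussian_privacy_loss_and_sup (μ : ℝ) (hμ : 0 < μ) (ε : ℝ) (hε : 0 ≤ ε) :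
    (∀ x : ℝ, Real.log (gaussianPDFReal μ 1 x / gaussianPDFReal 0 1 x)
        = μ * x - μ ^ 2 / 2) ∧
    IsGreatest
      {d : ℝ | ∃ S : Set ℝ, MeasurableSet S ∧
        d = ((gaussianReal μ 1) S).toReal - exp ε * ((gaussianReal 0 1) S).toReal}
      (Phi (-ε / μ + μ / 2) - exp ε * Phi (-ε / μ - μ / 2)) :=
  gaussian_privacy_loss_and_sup_general μ hμ ε
end

section
/- The log-likelihood ratio score L(g) = log Pr(g | D) − log Pr(g | D') for the symmetric binomial Gaussian mixtures is an odd, strictly increasing function of g (for q ∈ (0,1), T ≥ 1, C > 0, σ > 0). -/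
open Real MeasureTheory ProbabilityTheory Finset
open scoped NNReal

lemma gauss_neg_neg (μ : ℝ) (v : ℝ≥0) (x : ℝ) :
    gaussianPDFReal (-μ) v (-x) = gaussianPDFReal μ v x := by
  simp only [gaussianPDFReal]
  ring_nf

lemma gauss_prod (v : ℝ≥0) (μ ν x y : ℝ) :
    gaussianPDFReal μ v x * gaussianPDFReal ν v y =
      (√(2 * π * v))⁻¹ * (√(2 * π * v))⁻¹ *
        rexp ((-(x - μ) ^ 2 + -(y - ν) ^ 2) / (2 * v)) := by
  simp only [gaussianPDFReal]
  rw [show ((-(x - μ) ^ 2 + -(y - ν) ^ 2) / (2 * (v:ℝ)) : ℝ)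
      = -(x - μ) ^ 2 / (2 * v) + -(y - ν) ^ 2 / (2 * v) by ring, Real.exp_add]
  ring

lemma gauss_swap_le (v : ℝ≥0) (hv : 0 < (v : ℝ)) {μ ν x y : ℝ} (hxy : x ≤ y) (h : 0 ≤ μ + ν) :
    gaussianPDFReal μ v x * gaussianPDFReal (-ν) v y ≤
      gaussianPDFReal μ v y * gaussianPDFReal (-ν) v x := by
  rw [gauss_prod, gauss_prod]
  have hc : (0:ℝ) ≤ (√(2 * π * v))⁻¹ * (√(2 * π * v))⁻¹ := by positivity
  apply mul_le_mul_of_nonneg_left _ hc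
  apply Real.exp_le_exp.2
  apply div_le_div_of_nonneg_right ?_ (by positivity : (0:ℝ) ≤ 2 * (v:ℝ))
  nlinarith [mul_nonneg h (sub_nonneg.2 hxy)]

lemma gauss_swap_lt (v : ℝ≥0) (hv : 0 < (v : ℝ)) {μ ν x y : ℝ} (hxy : x < y) (h : 0 < μ + ν) :
    gaussianPDFReal μ v x * gaussianPDFReal (-ν) v y <
      gaussianPDFReal μ v y * gaussianPDFReal (-ν) v x := by
  rw [gauss_prod, gauss_prod]
  have hc : (0:ℝ) < (√(2 * π * v))⁻¹ * (√(2 * π * v))⁻¹ := by positivity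
  apply mul_lt_mul_of_pos_left _ hc
  apply Real.exp_lt_exp.2
  apply div_lt_div_of_pos_right ?_ (by linarith : (0:ℝ) < 2 * (v:ℝ))
  nlinarith [mul_pos h (sub_pos.2 hxy)]

/-- The log-likelihood ratio score
`L(g) = log Pr(g | D) − log Pr(g | D')` for the symmetric binomial Gaussian
mixtures (means `+kC` vs `−kC`) is an odd, strictly increasing function of `g`,
for `q ∈ (0,1)`, `T ≥ 1`, `C > 0`, `σ > 0`. -/
theorem llr_score_odd_strictMono
    (T : ℕ) (hT : 1 ≤ T) (q C σ : ℝ) (hq : q ∈ Set.Ioo (0 : ℝ) 1)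
    (hC : 0 < C) (hσ : 0 < σ) :
    (∀ g : ℝ,
      (Real.log (∑ k ∈ Finset.range (T + 1),
          (T.choose k : ℝ) * q ^ k * (1 - q) ^ (T - k) *
            gaussianPDFReal (k * C) ((T * σ ^ 2 * C ^ 2 : ℝ).toNNReal) (-g))
        - Real.log (∑ k ∈ Finset.range (T + 1),
          (T.choose k : ℝ) * q ^ k * (1 - q) ^ (T - k) *
            gaussianPDFReal (-(k * C)) ((T * σ ^ 2 * C ^ 2 : ℝ).toNNReal) (-g)))
      = -(Real.log (∑ k ∈ Finset.range (T + 1),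
          (T.choose k : ℝ) * q ^ k * (1 - q) ^ (T - k) *
            gaussianPDFReal (k * C) ((T * σ ^ 2 * C ^ 2 : ℝ).toNNReal) g)
        - Real.log (∑ k ∈ Finset.range (T + 1),
          (T.choose k : ℝ) * q ^ k * (1 - q) ^ (T - k) *
            gaussianPDFReal (-(k * C)) ((T * σ ^ 2 * C ^ 2 : ℝ).toNNReal) g))) ∧
    StrictMono (fun g : ℝ =>
      Real.log (∑ k ∈ Finset.range (T + 1),
          (T.choose k : ℝ) * q ^ k * (1 - q) ^ (T - k) *
            gaussianPDFReal (k * C) ((T * σ ^ 2 * C ^ 2 : ℝ).toNNReal) g)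
        - Real.log (∑ k ∈ Finset.range (T + 1),
          (T.choose k : ℝ) * q ^ k * (1 - q) ^ (T - k) *
            gaussianPDFReal (-(k * C)) ((T * σ ^ 2 * C ^ 2 : ℝ).toNNReal) g)) := by
  obtain ⟨hq0, hq1⟩ := hq
  set V : ℝ≥0 := (T * σ ^ 2 * C ^ 2 : ℝ).toNNReal with hVdef
  have hTpos : (0:ℝ) < (T:ℝ) := by exact_mod_cast Nat.pos_of_ne_zero (by omega)
  have hv0 : (0:ℝ) < T * σ ^ 2 * C ^ 2 := by positivity
  have hV : 0 < (V:ℝ) := by rw [hVdef, Real.coe_toNNReal _ hv0.le]; exact hv0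
  set w : ℕ → ℝ := fun k => (T.choose k : ℝ) * q ^ k * (1 - q) ^ (T - k) with hwdef
  have hw : ∀ k ∈ Finset.range (T + 1), 0 < w k := by
    intro k hk
    have hk' : k ≤ T := by simpa [Nat.lt_succ_iff] using hk
    have : 0 < (T.choose k : ℝ) := by exact_mod_cast Nat.choose_pos hk'
    have h1q : (0:ℝ) < 1 - q := by linarith
    positivity
  set S₁ : ℝ → ℝ := fun g => ∑ k ∈ Finset.range (T + 1), w k * gaussianPDFReal (k * C) V g
    with hS₁def
  set S₂ : ℝ → ℝ := fun g => ∑ k ∈ Finset.range (T + 1), w k * gaussianPDFReal (-(k * C)) V g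
    with hS₂def
  have hS₁pos : ∀ g, 0 < S₁ g := fun g =>
    Finset.sum_pos (fun k hk => mul_pos (hw k hk)
      (gaussianPDFReal_pos _ _ _ (by exact_mod_cast hV.ne'))) ⟨0, by simp⟩
  have hS₂pos : ∀ g, 0 < S₂ g := fun g =>
    Finset.sum_pos (fun k hk => mul_pos (hw k hk)
      (gaussianPDFReal_pos _ _ _ (by exact_mod_cast hV.ne'))) ⟨0, by simp⟩
  have hflip1 : ∀ g, S₂ (-g) = S₁ g := by
    intro g
    refine Finset.sum_congr rfl fun k _ => ?_
    rw [gauss_neg_neg]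
  have hflip2 : ∀ g, S₁ (-g) = S₂ g := by
    intro g
    refine Finset.sum_congr rfl fun k _ => ?_
    rw [← gauss_neg_neg (↑k * C) V (-g), neg_neg]
  have key : ∀ x y : ℝ, x < y → S₁ x * S₂ y < S₁ y * S₂ x := by
    intro x y hxy
    rw [hS₁def, hS₂def]
    simp only
    rw [Finset.sum_mul_sum, Finset.sum_mul_sum]
    apply Finset.sum_lt_sum
    · intro k hk
      apply Finset.sum_le_sum
      intro l hl
      have hswap := gauss_swap_le V hV hxy.le
        (show (0:ℝ) ≤ ↑k * C + ↑l * C by positivity)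
      calc w k * gaussianPDFReal (↑k * C) V x * (w l * gaussianPDFReal (-(↑l * C)) V y)
          = (w k * w l) * (gaussianPDFReal (↑k * C) V x * gaussianPDFReal (-(↑l * C)) V y) := by
            ring
        _ ≤ (w k * w l) * (gaussianPDFReal (↑k * C) V y * gaussianPDFReal (-(↑l * C)) V x) :=
            mul_le_mul_of_nonneg_left hswap (mul_nonneg (hw k hk).le (hw l hl).le)
        _ = w k * gaussianPDFReal (↑k * C) V y * (w l * gaussianPDFReal (-(↑l * C)) V x) := by
            ring
    · refine ⟨1, Finset.mem_range.2 (by omega), ?_⟩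
      apply Finset.sum_lt_sum
      · intro l hl
        have hswap := gauss_swap_le V hV hxy.le
          (show (0:ℝ) ≤ ↑(1:ℕ) * C + ↑l * C by positivity)
        calc w 1 * gaussianPDFReal (↑(1:ℕ) * C) V x * (w l * gaussianPDFReal (-(↑l * C)) V y)
            = (w 1 * w l) * (gaussianPDFReal (↑(1:ℕ) * C) V x * gaussianPDFReal (-(↑l * C)) V y) := by
              ring
          _ ≤ (w 1 * w l) * (gaussianPDFReal (↑(1:ℕ) * C) V y * gaussianPDFReal (-(↑l * C)) V x) :=
              mul_le_mul_of_nonneg_left hswap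
                (mul_nonneg (hw 1 (Finset.mem_range.2 (by omega))).le (hw l hl).le)
          _ = w 1 * gaussianPDFReal (↑(1:ℕ) * C) V y * (w l * gaussianPDFReal (-(↑l * C)) V x) := by
              ring
      · refine ⟨0, Finset.mem_range.2 (by omega), ?_⟩
        have hswap := gauss_swap_lt V hV hxy
          (show (0:ℝ) < ↑(1:ℕ) * C + ↑(0:ℕ) * C by push_cast; linarith)
        calc w 1 * gaussianPDFReal (↑(1:ℕ) * C) V x * (w 0 * gaussianPDFReal (-(↑(0:ℕ) * C)) V y)
            = (w 1 * w 0) * (gaussianPDFReal (↑(1:ℕ) * C) V x * gaussianPDFReal (-(↑(0:ℕ) * C)) V y) := by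
              ring
          _ < (w 1 * w 0) * (gaussianPDFReal (↑(1:ℕ) * C) V y * gaussianPDFReal (-(↑(0:ℕ) * C)) V x) :=
              mul_lt_mul_of_pos_left hswap
                (mul_pos (hw 1 (Finset.mem_range.2 (by omega)))
                  (hw 0 (Finset.mem_range.2 (by omega))))
          _ = w 1 * gaussianPDFReal (↑(1:ℕ) * C) V y * (w 0 * gaussianPDFReal (-(↑(0:ℕ) * C)) V x) := by
              ring
  constructor
  · intro g
    show Real.log (S₁ (-g)) - Real.log (S₂ (-g)) = -(Real.log (S₁ g) - Real.log (S₂ g))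
    rw [hflip1, hflip2]
    ring
  · intro x y hxy
    show Real.log (S₁ x) - Real.log (S₂ x) < Real.log (S₁ y) - Real.log (S₂ y)
    have h := Real.log_lt_log (mul_pos (hS₁pos x) (hS₂pos y)) (key x y hxy)
    rw [Real.log_mul (hS₁pos x).ne' (hS₂pos y).ne',
        Real.log_mul (hS₁pos y).ne' (hS₂pos x).ne'] at h
    linarith
end
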